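/- arXiv:2401.00392 — 2 statements merged into one kernel-verified Lean document; each statement's English description precedes it below -/
import Mathlib

section
/- Let G be a triangle-free graph on 41 vertices in which every vertex has degree 8 or 9. Then there exists a vertex v of degree 8 such that the induced subgraph on the set of vertices not adjacent to v and not equal to v (the dual neighbourhood of v) has at most 112 edges. -/
/-!
Let `a` be the number of vertices of degree 8. Counting degrees gives `2 e(G) + a = 9 · 41`, so
`a` is odd. Adjacent vertices of a triangle-free graph have no common neighbour, so some vertex `v`
of degree 8 has at most `(a - 1) / 2` neighbours of degree 8, and the degree sum over its
neighbourhood is at least `72 - (a - 1) / 2`. That neighbourhood is independent, so this sum counts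
distinct edges, none of them inside the dual neighbourhood of `v`, which therefore has at most
`(369 - a) / 2 - 72 + (a - 1) / 2 = 112` edges.
-/

open Finset SimpleGraph

namespace SimpleGraph

variable {V : Type*} [Fintype V] {G : SimpleGraph V} [DecidableRel G.Adj]

theorem sum_degree_add_card_filter_degree_eq {s : Finset V} {k : ℕ}
    (hdeg : ∀ w ∈ s, G.degree w = k ∨ G.degree w = k + 1) :
    ∑ w ∈ s, G.degree w + #{w ∈ s | G.degree w = k} = (k + 1) * #s := by
  rw [card_filter, ← sum_add_distrib, mul_comm, ← smul_eq_mul, ← sum_const]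
  refine sum_congr rfl fun w hw => ?_
  rcases hdeg w hw with h | h <;> simp [h]

variable [DecidableEq V]

theorem card_edgeFinset_induce (s : Set V) [DecidablePred (· ∈ s)] :
    #(G.induce s).edgeFinset = #(G.edgeFinset ∩ s.toFinset.sym2) := by
  rw [← map_edgeFinset_induce, card_map]

theorem IsIndepSet.sum_degree_eq_card_biUnion_incidenceFinset {N : Finset V}
    (hN : G.IsIndepSet N) :
    ∑ w ∈ N, G.degree w = #(N.biUnion fun w => G.incidenceFinset w) := by
  rw [card_biUnion]
  · simp only [card_incidenceFinset_eq_degree]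
  · intro a ha b hb hab
    rw [Function.onFun, ← disjoint_coe, coe_incidenceFinset, coe_incidenceFinset,
      Set.disjoint_iff_inter_eq_empty]
    exact G.incidenceSet_inter_incidenceSet_of_not_adj (hN ha hb hab) hab

theorem IsIndepSet.card_edgeFinset_induce_add_sum_degree_le {N : Finset V}
    (hN : G.IsIndepSet N) {s : Set V} [DecidablePred (· ∈ s)] (hsN : Disjoint s N) :
    #(G.induce s).edgeFinset + ∑ w ∈ N, G.degree w ≤ #G.edgeFinset := by
  rw [card_edgeFinset_induce, hN.sum_degree_eq_card_biUnion_incidenceFinset,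
    ← card_union_of_disjoint]
  · refine card_le_card (union_subset inter_subset_left (biUnion_subset.2 fun w _ => ?_))
    exact G.incidenceFinset_subset w
  · rw [Finset.disjoint_left]
    intro e he heN
    obtain ⟨w, hw, hew⟩ := mem_biUnion.1 heN
    have hws : w ∈ s := by
      simpa using mem_sym2_iff.1 (mem_inter.1 he).2 w ((G.mem_incidenceFinset w e).1 hew).2
    exact hsN.ne_of_mem hws (mem_coe.2 hw) rfl

theorem CliqueFree.exists_two_mul_card_neighborFinset_inter_le (hG : G.CliqueFree 3)
    {A : Finset V} (hA : A.Nonempty) :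
    ∃ v ∈ A, 2 * #(G.neighborFinset v ∩ A) ≤ #A := by
  by_cases hedge : ∃ u ∈ A, ∃ w ∈ A, G.Adj u w
  · obtain ⟨u, hu, w, hw, huw⟩ := hedge
    have hdisj : Disjoint (G.neighborFinset u ∩ A) (G.neighborFinset w ∩ A) := by
      refine Finset.disjoint_left.2 fun x hxu hxw => ?_
      simp only [mem_inter, mem_neighborFinset] at hxu hxw
      exact isIndepSet_neighborSet_of_triangleFree G hG x hxu.1.symm hxw.1.symm huw.ne huw
    have hle : #(G.neighborFinset u ∩ A) + #(G.neighborFinset w ∩ A) ≤ #A := by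
      rw [← card_union_of_disjoint hdisj]
      exact card_le_card (union_subset inter_subset_right inter_subset_right)
    rcases le_total #(G.neighborFinset u ∩ A) #(G.neighborFinset w ∩ A) with h | h
    · exact ⟨u, hu, by omega⟩
    · exact ⟨w, hw, by omega⟩
  · push Not at hedge
    obtain ⟨v, hv⟩ := hA
    refine ⟨v, hv, ?_⟩
    have : G.neighborFinset v ∩ A = ∅ :=
      eq_empty_of_forall_notMem fun w hw => by
        simp only [mem_inter, mem_neighborFinset] at hw
        exact hedge v hv w hw.2 hw.1
    simp [this]

end SimpleGraph

/-- In a triangle-free graph on 41 vertices with all degrees 8 or 9, some vertex `v` of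
degree 8 has dual neighbourhood (the induced subgraph on the vertices distinct from `v`
and not adjacent to `v`) with at most 112 edges. -/
theorem exists_degree_eight_vertex_small_dual_neighborhood
    {V : Type*} [Fintype V] [DecidableEq V] (G : SimpleGraph V) [DecidableRel G.Adj]
    (hcard : Fintype.card V = 41) (hG : G.CliqueFree 3)
    (hdeg : ∀ v : V, G.degree v = 8 ∨ G.degree v = 9) :
    ∃ v : V, G.degree v = 8 ∧
      (G.induce {w | w ≠ v ∧ ¬ G.Adj v w}).edgeFinset.card ≤ 112 := by
  set A : Finset V := {u | G.degree u = 8}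
  have hedges : 2 * #G.edgeFinset + #A = 9 * 41 := by
    rw [← G.sum_degrees_eq_twice_card_edges, ← hcard, ← card_univ]
    exact sum_degree_add_card_filter_degree_eq fun w _ => hdeg w
  obtain ⟨v, hvA, hvA_nbrs⟩ :=
    hG.exists_two_mul_card_neighborFinset_inter_le (card_pos.1 (by omega : 0 < #A))
  have hv : G.degree v = 8 := (mem_filter.1 hvA).2
  have hnbrs : ∑ w ∈ G.neighborFinset v, G.degree w + #(G.neighborFinset v ∩ A) = 9 * 8 := by
    have := sum_degree_add_card_filter_degree_eq (s := G.neighborFinset v) fun w _ => hdeg w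
    rw [← filter_mem_eq_inter]
    simpa [A, hv] using this
  have hdual := (coe_neighborFinset G v ▸ isIndepSet_neighborSet_of_triangleFree G hG v)
    |>.card_edgeFinset_induce_add_sum_degree_le (s := {w | w ≠ v ∧ ¬ G.Adj v w})
      (Set.disjoint_left.2 fun w hw hwN => hw.2 (by simpa using hwN))
  exact ⟨v, hv, by omega⟩
end

section
/- Let Γ be a triangle-free graph with no independent set of size 10, v a vertex of Γ of degree d with neighbours v₁,…,v_d, and let G' be the induced subgraph on the dual neighbourhood of v. For each i let S_i = N(v_i) ∩ V(G'). Then each S_i is an independent set of G', the set {v₁,…,v_d} is independent, and for every nonempty subset K ⊆ {1,…,d} the induced subgraph of G' on V(G') \ ⋃_{k∈K} S_k has independence number at most 9 - |K|. -/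
open Finset

/-- Let `Γ` be triangle-free with no independent 10-set, `v` a vertex whose neighbours are
`f 0, …, f (d-1)`, and let `D` be the dual neighbourhood of `v`.  Setting
`S i = N(f i) ∩ D`, each `S i` is independent, the set of neighbours of `v` is
independent, and for every nonempty `K ⊆ {1,…,d}` every independent set contained in
`D ∖ ⋃_{k ∈ K} S k` has at most `9 - |K|` elements. -/
theorem gluing_compatibility_conditions
    {V : Type*} [Fintype V] [DecidableEq V] (Γ : SimpleGraph V) [DecidableRel Γ.Adj]
    (hG3 : Γ.CliqueFree 3) (hG10 : Γᶜ.CliqueFree 10)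
    (v : V) (d : ℕ) (f : Fin d → V) (hinj : Function.Injective f)
    (hnbr : ∀ w : V, Γ.Adj v w ↔ ∃ i, f i = w) :
    (∀ i : Fin d, ∀ a ∈ (Γ.neighborFinset (f i)) ∩
        (univ.filter (fun w => w ≠ v ∧ ¬ Γ.Adj v w)),
      ∀ b ∈ (Γ.neighborFinset (f i)) ∩
        (univ.filter (fun w => w ≠ v ∧ ¬ Γ.Adj v w)), ¬ Γ.Adj a b) ∧
    (∀ i j : Fin d, ¬ Γ.Adj (f i) (f j)) ∧
    (∀ K : Finset (Fin d), K.Nonempty →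
      ∀ T : Finset V,
        T ⊆ (univ.filter (fun w => w ≠ v ∧ ¬ Γ.Adj v w)) \
            (K.biUnion fun i => (Γ.neighborFinset (f i)) ∩
              (univ.filter (fun w => w ≠ v ∧ ¬ Γ.Adj v w))) →
        (∀ a ∈ T, ∀ b ∈ T, ¬ Γ.Adj a b) →
        T.card ≤ 9 - K.card) := by
  have hvadj : ∀ i : Fin d, Γ.Adj v (f i) := fun i => (hnbr (f i)).2 ⟨i, rfl⟩
  have part2 : ∀ i j : Fin d, ¬ Γ.Adj (f i) (f j) := by
    intro i j hij
    exact hG3 {v, f i, f j}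
      ((SimpleGraph.is3Clique_triple_iff).2 ⟨hvadj i, hvadj j, hij⟩)
  refine ⟨?_, part2, ?_⟩
  · intro i a ha b hb hab
    rw [mem_inter, SimpleGraph.mem_neighborFinset] at ha hb
    exact hG3 {f i, a, b}
      ((SimpleGraph.is3Clique_triple_iff).2 ⟨ha.1, hb.1, hab⟩)
  · intro K hK T hTsub hTind
    have hsum : T.card + K.card ≤ 9 := by
      by_contra h
      push_neg at h
      set A := T ∪ K.image f with hA
      have hdisj : Disjoint T (K.image f) := by
        rw [Finset.disjoint_left]
        intro a haT haf
        obtain ⟨k, _, rfl⟩ := Finset.mem_image.mp haf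
        have := hTsub haT
        rw [mem_sdiff, mem_filter] at this
        exact this.1.2.2 (hvadj k)
      have hcard : A.card = T.card + K.card := by
        rw [hA, card_union_of_disjoint hdisj, Finset.card_image_of_injective _ hinj]
      have hnotadj : ∀ a ∈ T, ∀ k ∈ K, ¬ Γ.Adj a (f k) := by
        intro a haT k hk hadj
        have := hTsub haT
        rw [mem_sdiff] at this
        apply this.2
        rw [Finset.mem_biUnion]
        exact ⟨k, hk, by
          rw [mem_inter, SimpleGraph.mem_neighborFinset]
          have := (hTsub haT)
          rw [mem_sdiff] at this
          exact ⟨hadj.symm, this.1⟩⟩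
      have hclique : Γᶜ.IsClique ↑A := by
        intro a ha b hb hne
        rw [SimpleGraph.compl_adj]
        refine ⟨hne, ?_⟩
        simp only [hA, coe_union, Set.mem_union, mem_coe, Finset.mem_image] at ha hb
        rcases ha with haT | ⟨i, hi, rfl⟩
        · rcases hb with hbT | ⟨j, hj, rfl⟩
          · exact hTind a haT b hbT
          · exact hnotadj a haT j hj
        · rcases hb with hbT | ⟨j, hj, rfl⟩
          · exact fun hadj => hnotadj b hbT i hi hadj.symm
          · exact part2 i j
      have h10 : 10 ≤ A.card := by omega
      obtain ⟨s, hsA, hscard⟩ := Finset.exists_subset_card_eq h10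
      exact hG10 s ⟨hclique.subset (coe_subset.mpr hsA), hscard⟩
    omega
end
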